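/- In the Burling construction, every probe of G_{k+1} is an independent set of G_{k+1}, assuming every probe of G_k is an independent set of G_k. -/
import Mathlib


/-- Probe index type for the Burling construction: level `n` corresponds to the graph
`G_{n+1}` of the paper. A probe of level `n + 1` is given by a probe `P` of the outer
copy, a probe `Q` of the inner copy placed in `P`, and a Boolean flag (`false` = lower
probe `P ∪ Q`, `true` = upper probe `P ∪ {d_{P,Q}}`). -/
def BurlingProbeIdx : ℕ → Type
  | 0 => Unit
  | n + 1 => BurlingProbeIdx n × BurlingProbeIdx n × Bool

/-- Vertex type of the Burling graph of level `n` (the graph `G_{n+1}` of the paper):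
level `n + 1` consists of an outer copy of level `n`, an inner copy of level `n` for
each probe `P`, and a diagonal vertex `d_{P,Q}` for each probe `P` of the outer copy
and each probe `Q` of the inner copy attached to `P`. -/
def BurlingVertex : ℕ → Type
  | 0 => Unit
  | n + 1 =>
      BurlingVertex n ⊕
        (BurlingProbeIdx n × BurlingVertex n) ⊕
        (BurlingProbeIdx n × BurlingProbeIdx n)

instance instFintypeBurlingProbeIdx : ∀ n, Fintype (BurlingProbeIdx n)
  | 0 => inferInstanceAs (Fintype Unit)
  | n + 1 =>
      letI := instFintypeBurlingProbeIdx n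
      inferInstanceAs (Fintype (BurlingProbeIdx n × BurlingProbeIdx n × Bool))

instance instFintypeBurlingVertex : ∀ n, Fintype (BurlingVertex n)
  | 0 => inferInstanceAs (Fintype Unit)
  | n + 1 =>
      letI := instFintypeBurlingVertex n
      inferInstanceAs (Fintype (BurlingVertex n ⊕
        (BurlingProbeIdx n × BurlingVertex n) ⊕
        (BurlingProbeIdx n × BurlingProbeIdx n)))

/-- The set of vertices pierced by a probe in the Burling construction. -/
def burlingProbe : (n : ℕ) → BurlingProbeIdx n → Set (BurlingVertex n)
  | 0, _ => Set.univ
  | n + 1, ⟨P, Q, b⟩ =>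
      (Sum.inl '' burlingProbe n P) ∪
        (if b then {Sum.inr (Sum.inr (P, Q))}
         else (fun v => Sum.inr (Sum.inl (P, v))) '' burlingProbe n Q)

/-- One-directional adjacency relation generating the Burling graph of level `n`. -/
def burlingRel : (n : ℕ) → BurlingVertex n → BurlingVertex n → Prop
  | 0, _, _ => False
  | n + 1, x, y =>
      match x, y with
      | Sum.inl u, Sum.inl v => burlingRel n u v
      | Sum.inr (Sum.inl (P, u)), Sum.inr (Sum.inl (P', v)) => P = P' ∧ burlingRel n u v
      | Sum.inr (Sum.inr (P, Q)), Sum.inr (Sum.inl (P', v)) => P = P' ∧ v ∈ burlingProbe n Q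
      | _, _ => False

/-- The Burling graph of level `n` (the graph `G_{n+1}` of the paper). -/
def BurlingGraph (n : ℕ) : SimpleGraph (BurlingVertex n) :=
  SimpleGraph.fromRel (burlingRel n)

/-- In the Burling construction, every probe of `G_{k+1}` is an independent set,
assuming every probe of `G_k` is an independent set. (Level `n` here is the graph
`G_{n+1}` of the paper.) -/
theorem burlingProbe_succ_indep (n : ℕ)
    (hind : ∀ i : BurlingProbeIdx n, ∀ u ∈ burlingProbe n i, ∀ v ∈ burlingProbe n i,
      ¬ (BurlingGraph n).Adj u v) :
    ∀ j : BurlingProbeIdx (n + 1), ∀ u ∈ burlingProbe (n + 1) j,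
      ∀ v ∈ burlingProbe (n + 1) j, ¬ (BurlingGraph (n + 1)).Adj u v := by
  rintro ⟨P, Q, b⟩ u hu v hv ⟨hne, hrel⟩
  cases b <;>
    simp only [burlingProbe, Set.mem_union, Set.mem_image, Set.mem_singleton_iff,
      if_true, if_false, Bool.false_eq_true] at hu hv
  · rcases hu with ⟨a, ha, rfl⟩ | ⟨a, ha, rfl⟩ <;>
      rcases hv with ⟨c, hc, rfl⟩ | ⟨c, hc, rfl⟩
    · exact hind P a ha c hc ⟨fun h => hne (by rw [h]), hrel⟩
    · rcases hrel with h | h <;> exact h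
    · rcases hrel with h | h <;> exact h
    · rcases hrel with ⟨_, h⟩ | ⟨_, h⟩
      · exact hind Q a ha c hc ⟨fun h' => hne (by rw [h']), Or.inl h⟩
      · exact hind Q a ha c hc ⟨fun h' => hne (by rw [h']), Or.inr h⟩
  · rcases hu with ⟨a, ha, rfl⟩ | rfl <;> rcases hv with ⟨c, hc, rfl⟩ | rfl
    · exact hind P a ha c hc ⟨fun h => hne (by rw [h]), hrel⟩
    · rcases hrel with h | h <;> exact h
    · rcases hrel with h | h <;> exact h
    · exact hne rfl
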